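/- (Scale invariance, sample version) Let X₁, …, X_N ∈ ℝ^D, a > 0, b ∈ ℝ^D, and X̃ᵢ = aXᵢ + b. Then for all x, the empirical RDAD satisfies RDAD-hat(ax + b; X̃₁,…,X̃_N) = RDAD-hat(x; X₁,…,X_N), where RDAD-hat(x) = C · sqrt((1/k_DTM) Σᵢ₌₁^{k_DTM} (d(x, X_{(i)})/d_{(i)})²), with d_j the distance from X_j to its k_den-th nearest neighbor, d(x,X_{(i)})/d_{(i)} the i-th order statistic of the ratios d(x, X_j)/d_j, and C a constant depending only on N, k_den, D. -/

import Mathlib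

open MeasureTheory Set Pointwise

attribute [local instance] Classical.propDecidable

/-- The distance from `X j` to its `kden`-th nearest neighbor among `X 1, …, X N`
(excluding `X j` itself). -/
noncomputable def kNNDist {D N : ℕ} (kden : ℕ) (X : Fin N → EuclideanSpace ℝ (Fin D))
    (j : Fin N) : ℝ :=
  sInf {r : ℝ | 0 ≤ r ∧
    kden ≤ (Finset.univ.filter fun i => i ≠ j ∧ dist (X j) (X i) ≤ r).card}

/-- The empirical RDAD function
`C √((1/k_DTM) Σ_{i=1}^{k_DTM} (d(x, X_{(i)})/d_{(i)})²)`, where the sum of the `k_DTM`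
smallest squared ratios is expressed as the minimum over `k_DTM`-element subsets, and
`C = (k_den/(ω_D N))^{1/D}`. -/
noncomputable def RDADhat {D N : ℕ} (kden kdtm : ℕ)
    (X : Fin N → EuclideanSpace ℝ (Fin D)) (x : EuclideanSpace ℝ (Fin D)) : ℝ :=
  ((kden : ℝ) / ((volume (Metric.ball (0 : EuclideanSpace ℝ (Fin D)) 1)).toReal * N))
      ^ ((1 : ℝ) / D) *
    Real.sqrt ((1 / (kdtm : ℝ)) *
      sInf {s : ℝ | ∃ S : Finset (Fin N), S.card = kdtm ∧
        s = ∑ j ∈ S, (dist x (X j) / kNNDist kden X j) ^ 2})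


lemma dist_affine {D : ℕ} (a : ℝ) (ha : 0 < a) (b u v : EuclideanSpace ℝ (Fin D)) :
    dist (a • u + b) (a • v + b) = a * dist u v := by
  rw [dist_add_right, dist_smul₀, Real.norm_eq_abs, abs_of_pos ha]

lemma kNNDist_affine {D N : ℕ} (kden : ℕ) (X : Fin N → EuclideanSpace ℝ (Fin D))
    (a : ℝ) (ha : 0 < a) (b : EuclideanSpace ℝ (Fin D)) (j : Fin N) :
    kNNDist kden (fun i => a • X i + b) j = a * kNNDist kden X j := by
  unfold kNNDist
  have hset : {r : ℝ | 0 ≤ r ∧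
      kden ≤ (Finset.univ.filter fun i => i ≠ j ∧
        dist ((fun i => a • X i + b) j) ((fun i => a • X i + b) i) ≤ r).card}
      = a • {r : ℝ | 0 ≤ r ∧
        kden ≤ (Finset.univ.filter fun i => i ≠ j ∧ dist (X j) (X i) ≤ r).card} := by
    ext r
    simp only [Set.mem_smul_set, Set.mem_setOf_eq, smul_eq_mul, dist_affine a ha b]
    constructor
    · rintro ⟨hr, hc⟩
      refine ⟨r / a, ⟨div_nonneg hr ha.le, ?_⟩, by field_simp⟩
      convert hc using 2
      ext i
      simp only [Finset.mem_filter]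
      rw [le_div_iff₀ ha, mul_comm]
    · rintro ⟨y, ⟨hy, hc⟩, rfl⟩
      refine ⟨by positivity, ?_⟩
      convert hc using 2
      ext i
      simp only [Finset.mem_filter]
      rw [mul_le_mul_iff_right₀ ha]
  rw [hset, Real.sInf_smul_of_nonneg ha.le, smul_eq_mul]

/-- Scale invariance of the empirical RDAD: applying the affine map `x ↦ ax + b` to the sample
and the query point leaves the empirical RDAD unchanged. -/
theorem RDADhat_scale_invariance {D N : ℕ} (hD : 0 < D)
    (X : Fin N → EuclideanSpace ℝ (Fin D)) (hX : Function.Injective X)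
    (kden kdtm : ℕ) (hkden : 0 < kden) (hkden' : kden < N)
    (hkdtm : 0 < kdtm) (hkdtm' : kdtm < N)
    (a : ℝ) (ha : 0 < a) (b : EuclideanSpace ℝ (Fin D)) (x : EuclideanSpace ℝ (Fin D)) :
    RDADhat kden kdtm (fun i => a • X i + b) (a • x + b) = RDADhat kden kdtm X x := by
  have hsets : {s : ℝ | ∃ S : Finset (Fin N), S.card = kdtm ∧
      s = ∑ j ∈ S, (dist (a • x + b) ((fun i => a • X i + b) j) /
        kNNDist kden (fun i => a • X i + b) j) ^ 2}
      = {s : ℝ | ∃ S : Finset (Fin N), S.card = kdtm ∧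
      s = ∑ j ∈ S, (dist x (X j) / kNNDist kden X j) ^ 2} := by
    ext s
    constructor <;> rintro ⟨S, hS, rfl⟩ <;> refine ⟨S, hS, Finset.sum_congr rfl fun j _ => ?_⟩
    · rw [kNNDist_affine kden X a ha b j, dist_affine a ha b, mul_div_mul_left _ _ ha.ne']
    · rw [kNNDist_affine kden X a ha b j, dist_affine a ha b, mul_div_mul_left _ _ ha.ne']
  unfold RDADhat
  rw [hsets]
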